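/- arXiv:2407.14233 — 2 statements merged into one kernel-verified Lean document; each statement's English description precedes it below -/
import Mathlib

section
/- Let p be a real polynomial of degree n ≥ 1 such that |p(x)| ≥ 2 at every real critical point x of p (i.e., whenever p'(x) = 0). Then the preimage p⁻¹([−2,2]) is a union of at most n closed intervals with pairwise disjoint interiors, on each of which p is strictly monotone. -/
open Set

lemma sign_const_aux {f : ℝ → ℝ} (hf : Continuous f) {s : Set ℝ} (hs : OrdConnected s)
    (h : ∀ x ∈ s, f x ≠ 0) : (∀ x ∈ s, 0 < f x) ∨ (∀ x ∈ s, f x < 0) := by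
  by_contra hcon
  push_neg at hcon
  obtain ⟨⟨x, hx, hx0⟩, ⟨y, hy, hy0⟩⟩ := hcon
  have hfx : f x < 0 := lt_of_le_of_ne hx0 (h x hx)
  have hfy : 0 < f y := lt_of_le_of_ne hy0 (Ne.symm (h y hy))
  rcases le_total x y with hxy | hxy
  · obtain ⟨z, hz, hz0⟩ := intermediate_value_Icc hxy hf.continuousOn
      (mem_Icc.2 ⟨hfx.le, hfy.le⟩)
    exact h z (hs.out hx hy hz) hz0
  · obtain ⟨z, hz, hz0⟩ := intermediate_value_Icc' hxy hf.continuousOn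
      (mem_Icc.2 ⟨hfx.le, hfy.le⟩)
    exact h z (hs.out hy hx hz) hz0

lemma cover_nat_aux (c : ℕ → ℝ) (N : ℕ) : ∀ (x : ℝ), c 0 ≤ x → x ≤ c (N + 1) →
    ∃ j ≤ N, c j ≤ x ∧ x ≤ c (j + 1) := by
  induction N with
  | zero => exact fun x h0 h1 => ⟨0, le_refl 0, h0, h1⟩
  | succ N ih =>
    intro x h0 h1
    by_cases hx : x ≤ c (N + 1)
    · obtain ⟨j, hj, h⟩ := ih x h0 hx
      exact ⟨j, hj.trans (Nat.le_succ N), h⟩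
    · exact ⟨N + 1, le_refl _, (not_le.1 hx).le, h1⟩

/-- If a real polynomial `p` of degree `n ≥ 1` satisfies `|p| ≥ 2` at each of its real
critical points, then `p⁻¹([-2,2])` is a union of at most `n` closed intervals (bands)
with pairwise disjoint interiors, on each of which `p` is strictly monotone. -/
theorem bands_of_preimage (p : Polynomial ℝ) (n : ℕ) (hn : 1 ≤ n) (hdeg : p.natDegree = n)
    (hcrit : ∀ x : ℝ, (Polynomial.derivative p).eval x = 0 → 2 ≤ |p.eval x|) :
    ∃ (m : ℕ) (a b : Fin m → ℝ), m ≤ n ∧ (∀ i, a i ≤ b i) ∧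
      (fun E => p.eval E) ⁻¹' Icc (-2 : ℝ) 2 = ⋃ i, Icc (a i) (b i) ∧
      (∀ i j, i ≠ j → interior (Icc (a i) (b i)) ∩ interior (Icc (a j) (b j)) = ∅) ∧
      (∀ i, StrictMonoOn (fun E => p.eval E) (Icc (a i) (b i)) ∨
            StrictAntiOn (fun E => p.eval E) (Icc (a i) (b i))) := by
  classical
  set f : ℝ → ℝ := fun E => p.eval E with hf
  have hfc : Continuous f := p.continuous
  set S : Set ℝ := f ⁻¹' Icc (-2 : ℝ) 2 with hSdef
  have hSclosed : IsClosed S := isClosed_Icc.preimage hfc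
  have hdegpos : 0 < p.degree := by
    rw [Polynomial.natDegree_pos_iff_degree_pos.symm, hdeg]; omega
  set q : Polynomial ℝ := Polynomial.derivative p with hq
  have hqne : q ≠ 0 := by
    intro h0
    have := Polynomial.natDegree_eq_zero_of_derivative_eq_zero h0
    omega
  -- bound for S
  obtain ⟨B, hB0, hBS⟩ : ∃ B : ℝ, 0 ≤ B ∧ ∀ x ∈ S, |x| ≤ B := by
    have h1 : Filter.Tendsto (fun x : ℝ => ‖p.eval x‖) (Filter.cocompact ℝ) Filter.atTop :=
      p.tendsto_norm_atTop hdegpos tendsto_norm_cocompact_atTop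
    have h2 : {x : ℝ | 3 ≤ ‖p.eval x‖} ∈ Filter.cocompact ℝ := h1.eventually_ge_atTop 3
    obtain ⟨K, hK, hsub⟩ := Filter.mem_cocompact.mp h2
    obtain ⟨r, hr⟩ := hK.isBounded.subset_closedBall 0
    refine ⟨max r 0, le_max_right _ _, fun x hx => ?_⟩
    have hxK : x ∈ K := by
      by_contra hxK
      have h3 : (3 : ℝ) ≤ ‖p.eval x‖ := hsub hxK
      have hx2 : |p.eval x| ≤ 2 := abs_le.2 ⟨hx.1, hx.2⟩
      rw [Real.norm_eq_abs] at h3; linarith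
    have := hr hxK
    rw [Metric.mem_closedBall, Real.dist_eq, sub_zero] at this
    exact this.trans (le_max_left _ _)
  -- roots setup
  set R : Finset ℝ := q.roots.toFinset with hR
  set l : List ℝ := R.sort (· ≤ ·) with hl
  set k : ℕ := l.length with hk
  have hkn : k + 1 ≤ n := by
    have h1 : R.card ≤ Multiset.card q.roots := Multiset.toFinset_card_le _
    have h2 : Multiset.card q.roots ≤ q.natDegree := q.card_roots'
    have h3 : q.natDegree ≤ p.natDegree - 1 := Polynomial.natDegree_derivative_le p
    have h4 : k = R.card := Finset.length_sort _
    omega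
  set M : ℝ := B + 1 + ∑ r ∈ R, |r| with hM
  have hsum0 : (0 : ℝ) ≤ ∑ r ∈ R, |r| := Finset.sum_nonneg fun r _ => abs_nonneg r
  have hrM : ∀ r ∈ R, |r| < M := by
    intro r hr
    have : |r| ≤ ∑ r' ∈ R, |r'| := Finset.single_le_sum (fun r' _ => abs_nonneg r') hr
    simp only [hM]; linarith
  have hBM : B < M := by simp only [hM]; linarith
  -- the partition points
  set c : ℕ → ℝ := fun j => if j = 0 then -M else if j ≤ k then l.getD (j - 1) 0 else M
    with hc
  have hlsorted : l.Pairwise (· ≤ ·) := Finset.pairwise_sort _ _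
  have hmemM : ∀ i (h : i < k), |l.getD i 0| < M := by
    intro i h
    rw [List.getD_eq_getElem l 0 h]
    exact hrM _ ((Finset.mem_sort (α := ℝ) (· ≤ ·)).1 (l.getElem_mem h))
  have hc0 : c 0 = -M := by simp only [hc, if_pos rfl]
  have hcmid : ∀ j, j ≠ 0 → j ≤ k → c j = l.getD (j - 1) 0 := by
    intro j h1 h2; simp only [hc, if_neg h1, if_pos h2]
  have hctop : ∀ j, k < j → c j = M := by
    intro j h1
    simp only [hc, if_neg (by omega : ¬j = 0), if_neg (by omega : ¬j ≤ k)]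
  have hcmono : Monotone c := by
    apply monotone_nat_of_le_succ
    intro j
    rcases Nat.eq_zero_or_pos j with rfl | hj
    · rw [hc0]
      by_cases h1 : 1 ≤ k
      · rw [hcmid 1 one_ne_zero h1]
        have := hmemM 0 (by omega)
        rw [abs_lt] at this
        linarith [this.1]
      · rw [hctop 1 (by omega)]
        linarith
    · by_cases h1 : j + 1 ≤ k
      · rw [hcmid j (by omega) (by omega), hcmid (j + 1) (by omega) h1,
          List.getD_eq_getElem l 0 (by omega : j - 1 < l.length),
          List.getD_eq_getElem l 0 (by omega : j + 1 - 1 < l.length)]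
        exact hlsorted.rel_get_of_le (a := ⟨j - 1, by omega⟩) (b := ⟨j + 1 - 1, by omega⟩)
          (by simp only [Fin.mk_le_mk]; omega)
      · by_cases h2 : j ≤ k
        · rw [hcmid j (by omega) h2, hctop (j + 1) (by omega)]
          have := hmemM (j - 1) (by omega)
          rw [abs_lt] at this
          linarith [this.2]
        · rw [hctop j (by omega), hctop (j + 1) (by omega)]
  -- every root of q is some c i with 1 ≤ i ≤ k
  have hroot_repr : ∀ r : ℝ, q.eval r = 0 → ∃ i, 1 ≤ i ∧ i ≤ k ∧ c i = r := by
    intro r hr0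
    have hrR : r ∈ R := by
      rw [hR, Multiset.mem_toFinset, Polynomial.mem_roots hqne]
      exact hr0
    have hrl : r ∈ l := (Finset.mem_sort (α := ℝ) (· ≤ ·)).2 hrR
    obtain ⟨i, hi, hieq⟩ := List.getElem_of_mem hrl
    refine ⟨i + 1, by omega, by omega, ?_⟩
    rw [hcmid (i + 1) (by omega) (by omega), Nat.add_sub_cancel,
      List.getD_eq_getElem l 0 hi]
    exact hieq
  -- no root strictly inside each interval
  have hNR : ∀ j, ∀ x ∈ Ioo (c j) (c (j + 1)), q.eval x ≠ 0 := by
    intro j x hx h0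
    obtain ⟨i, _, _, hci⟩ := hroot_repr x h0
    have h1 : j < i := by
      by_contra h
      exact absurd (hcmono (by omega : i ≤ j)) (by rw [hci]; exact not_le.2 hx.1)
    have h2 : i < j + 1 := by
      by_contra h
      exact absurd (hcmono (by omega : j + 1 ≤ i)) (by rw [hci]; exact not_le.2 hx.2)
    omega
  -- monotonicity on each closed interval
  have hmono : ∀ j, StrictMonoOn f (Icc (c j) (c (j + 1))) ∨
      StrictAntiOn f (Icc (c j) (c (j + 1))) := by
    intro j
    have hderiv : ∀ x : ℝ, deriv f x = q.eval x := by
      intro x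
      rw [hf, hq]
      exact Polynomial.deriv (𝕜 := ℝ) (p := p) (x := x)
    rcases sign_const_aux q.continuous ordConnected_Ioo (hNR j) with hpos | hneg
    · left
      apply strictMonoOn_of_deriv_pos (convex_Icc _ _) hfc.continuousOn
      intro x hx
      rw [interior_Icc] at hx
      rw [hderiv x]
      exact hpos x hx
    · right
      apply strictAntiOn_of_deriv_neg (convex_Icc _ _) hfc.continuousOn
      intro x hx
      rw [interior_Icc] at hx
      rw [hderiv x]
      exact hneg x hx
  set T : ℕ → Set ℝ := fun j => S ∩ Icc (c j) (c (j + 1)) with hT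
  have hTcompact : ∀ j, IsCompact (T j) := fun j =>
    IsCompact.of_isClosed_subset isCompact_Icc (hSclosed.inter isClosed_Icc)
      inter_subset_right
  have hTicc : ∀ j, (T j).Nonempty → T j = Icc (sInf (T j)) (sSup (T j)) := by
    intro j hne
    have hoc : OrdConnected (T j) := by
      constructor
      intro x hx y hy z hz
      refine ⟨?_, (ordConnected_Icc.out hx.2 hy.2) hz⟩
      have hxI := hx.2; have hyI := hy.2
      have hzI := (ordConnected_Icc.out hx.2 hy.2) hz
      rcases hmono j with hm | hm
      · exact ⟨hx.1.1.trans (hm.monotoneOn hxI hzI hz.1),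
          (hm.monotoneOn hzI hyI hz.2).trans hy.1.2⟩
      · exact ⟨hy.1.1.trans (hm.antitoneOn hzI hyI hz.2),
          (hm.antitoneOn hxI hzI hz.1).trans hx.1.2⟩
    exact eq_Icc_of_connected_compact ⟨hne, hoc.isPreconnected⟩ (hTcompact j)
  -- cover
  have hcover : ∀ x ∈ S, ∃ j ≤ k, x ∈ T j := by
    intro x hx
    have hxB := hBS x hx
    rw [abs_le] at hxB
    have h0 : c 0 ≤ x := by simp only [hc, if_pos rfl]; linarith [hxB.1]
    have h1 : x ≤ c (k + 1) := by
      simp only [hc, if_neg (by omega : ¬k + 1 = 0), if_neg (by omega : ¬k + 1 ≤ k)]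
      linarith [hxB.2, hBM]
    obtain ⟨j, hj, hjx⟩ := cover_nat_aux c k x h0 h1
    exact ⟨j, hj, hx, hjx⟩
  -- final packaging
  set F : Finset ℕ := (Finset.range (k + 1)).filter (fun j => (T j).Nonempty) with hF
  set m : ℕ := F.card with hm
  have hmn : m ≤ n := by
    have h := Finset.card_filter_le (Finset.range (k + 1)) (fun j => (T j).Nonempty)
    rw [Finset.card_range] at h
    rw [hm, hF]
    exact h.trans hkn
  set e := F.equivFin with he
  set a : Fin m → ℝ := fun i => sInf (T ((e.symm i) : ℕ)) with ha
  set b : Fin m → ℝ := fun i => sSup (T ((e.symm i) : ℕ)) with hb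
  have hFne : ∀ i : Fin m, (T ((e.symm i) : ℕ)).Nonempty := by
    intro i
    exact (Finset.mem_filter.mp (e.symm i).2).2
  have hIccT : ∀ i : Fin m, Icc (a i) (b i) = T ((e.symm i) : ℕ) :=
    fun i => (hTicc _ (hFne i)).symm
  have hab : ∀ i, a i ≤ b i := by
    intro i
    have h1 := hFne i
    rw [hTicc _ h1] at h1
    exact nonempty_Icc.1 h1
  refine ⟨m, a, b, hmn, hab, ?_, ?_, ?_⟩
  · ext x
    constructor
    · intro hx
      obtain ⟨j, hjk, hjT⟩ := hcover x hx
      have hjF : j ∈ F := Finset.mem_filter.2 ⟨Finset.mem_range.2 (by omega), ⟨x, hjT⟩⟩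
      refine mem_iUnion.2 ⟨e ⟨j, hjF⟩, ?_⟩
      rw [hIccT, Equiv.symm_apply_apply]
      exact hjT
    · intro hx
      obtain ⟨i, hi⟩ := mem_iUnion.1 hx
      rw [hIccT i] at hi
      exact hi.1
  · intro i j hij
    have hne : ((e.symm i) : ℕ) ≠ ((e.symm j) : ℕ) := by
      intro h
      exact hij (by simpa using e.symm.injective (Subtype.ext h))
    set j1 : ℕ := ((e.symm i) : ℕ)
    set j2 : ℕ := ((e.symm j) : ℕ)
    have hsub1 : interior (Icc (a i) (b i)) ⊆ Ioo (c j1) (c (j1 + 1)) := by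
      rw [← interior_Icc]
      apply interior_mono
      rw [hIccT]; exact inter_subset_right
    have hsub2 : interior (Icc (a j) (b j)) ⊆ Ioo (c j2) (c (j2 + 1)) := by
      rw [← interior_Icc]
      apply interior_mono
      rw [hIccT]; exact inter_subset_right
    rw [eq_empty_iff_forall_notMem]
    intro x hx
    have h1 := hsub1 hx.1
    have h2 := hsub2 hx.2
    rcases Nat.lt_or_ge j1 j2 with h | h
    · have := hcmono (by omega : j1 + 1 ≤ j2)
      exact absurd (h1.2.trans_le (this.trans h2.1.le)) (lt_irrefl x)
    · have hlt : j2 < j1 := by omega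
      have := hcmono (by omega : j2 + 1 ≤ j1)
      exact absurd (h2.2.trans_le (this.trans h1.1.le)) (lt_irrefl x)
  · intro i
    have hsub : Icc (a i) (b i) ⊆ Icc (c ((e.symm i) : ℕ)) (c (((e.symm i) : ℕ) + 1)) := by
      rw [hIccT]; exact inter_subset_right
    exact (hmono _).imp (fun h => h.mono hsub) (fun h => h.mono hsub)
end

section
/- Let λ be an eigenvalue of the n×n matrix H_n(g) (the non-Hermitian Anderson model on the ring with potential v₁,…,v_n and parameter g ≥ 0). Then Δ_n(λ) = 2·cosh(n·g) up to sign, i.e., |Δ_n(λ)| = 2·cosh(n·g) when the characteristic polynomial identity det(λ − H_n(g)) = 0 is rewritten via transfer matrices; more precisely, Δ_n(λ) = e^{ng} + e^{−ng} where Δ_n(E) = Tr(A_{E,n}···A_{E,1}) with A_{E,k} = [[E − v_k, −1],[1,0]]. -/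
open Matrix

set_option maxHeartbeats 1000000

/-- The non-Hermitian Anderson model on a ring of `n` sites. -/
noncomputable def andersonRing (n : ℕ) (g : ℝ) (v : Fin n → ℝ) : Matrix (Fin n) (Fin n) ℝ :=
  Matrix.of fun i j =>
    if (i : ℕ) = (j : ℕ) then v i
    else if (j : ℕ) = (i : ℕ) + 1 then Real.exp g
    else if (i : ℕ) = (j : ℕ) + 1 then Real.exp (-g)
    else if (i : ℕ) = n - 1 ∧ (j : ℕ) = 0 then Real.exp g
    else if (i : ℕ) = 0 ∧ (j : ℕ) = n - 1 then Real.exp (-g)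
    else 0

/-- The transfer matrix `A_{E,k}` with potential value `x = v_k`. -/
def transferMatrix (E x : ℝ) : Matrix (Fin 2) (Fin 2) ℝ :=
  !![E - x, -1; 1, 0]

/-- `Δ_n(E) = Tr(A_{E,n} ⋯ A_{E,1})`. -/
noncomputable def traceDisc (n : ℕ) (v : Fin n → ℝ) (E : ℝ) : ℝ :=
  ((List.ofFn fun k : Fin n => transferMatrix E (v k)).reverse.prod).trace

/-- The gauge-transformed eigenvector sequence `φ_k = e^{(k-1)g} ψ_{(k-1) mod n}`. -/
noncomputable def phiSeq (n : ℕ) (hn : 0 < n) (g : ℝ) (ψ : Fin n → ℝ) (k : ℕ) : ℝ :=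
  Real.exp (((k : ℝ) - 1) * g) * ψ ⟨(k + n - 1) % n, Nat.mod_lt _ hn⟩

lemma row_eq {n : ℕ} (hn : 3 ≤ n) (g : ℝ) (v : Fin n → ℝ) (lam : ℝ)
    (ψ : Fin n → ℝ) (hψ : (andersonRing n g v).mulVec ψ = lam • ψ) (i : Fin n) :
    Real.exp (-g) * ψ ⟨(i.val + n - 1) % n, Nat.mod_lt _ (by omega)⟩ + v i * ψ i
      + Real.exp g * ψ ⟨(i.val + 1) % n, Nat.mod_lt _ (by omega)⟩ = lam * ψ i := by
  have hi := i.isLt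
  have hq : (i.val + 1) % n = if i.val + 1 < n then i.val + 1 else 0 := by
    split
    · exact Nat.mod_eq_of_lt ‹_›
    · have : i.val + 1 = n := by omega
      simp [this]
  have hp : (i.val + n - 1) % n = if i.val = 0 then n - 1 else i.val - 1 := by
    split
    · rename_i h
      rw [h]
      simp only [Nat.zero_add]
      exact Nat.mod_eq_of_lt (by omega)
    · have : i.val + n - 1 = (i.val - 1) + n := by omega
      rw [this, Nat.add_mod_right, Nat.mod_eq_of_lt (by omega)]
  have hsum : ∑ j, andersonRing n g v i j * ψ j = lam * ψ i := by
    simpa [Matrix.mulVec, dotProduct] using congrFun hψ i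
  set prev : Fin n := ⟨(i.val + n - 1) % n, Nat.mod_lt _ (by omega)⟩ with hprev
  set next : Fin n := ⟨(i.val + 1) % n, Nat.mod_lt _ (by omega)⟩ with hnext
  have key : ∀ j : Fin n, andersonRing n g v i j * ψ j =
      (if j = prev then Real.exp (-g) * ψ j else 0) +
      (if j = i then v i * ψ j else 0) +
      (if j = next then Real.exp g * ψ j else 0) := by
    intro j
    have hj := j.isLt
    simp only [andersonRing, Matrix.of_apply, Fin.ext_iff, hprev, hnext, hp, hq]
    split_ifs <;> first | (exfalso; omega) | ring
  rw [Finset.sum_congr rfl (fun j _ => key j)] at hsum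
  simp only [Finset.sum_add_distrib, Finset.sum_ite_eq', Finset.mem_univ, if_true] at hsum
  exact hsum

lemma phi_rec {n : ℕ} (hn : 3 ≤ n) (g : ℝ) (v : Fin n → ℝ) (lam : ℝ)
    (ψ : Fin n → ℝ) (hψ : (andersonRing n g v).mulVec ψ = lam • ψ) (k : ℕ) :
    phiSeq n (by omega) g ψ (k + 2) =
      (lam - v ⟨k % n, Nat.mod_lt _ (by omega)⟩) * phiSeq n (by omega) g ψ (k + 1)
        - phiSeq n (by omega) g ψ k := by
  have h := row_eq hn g v lam ψ hψ ⟨k % n, Nat.mod_lt _ (by omega)⟩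
  -- rewrite Fin indices
  have e1 : (⟨(k % n + 1) % n, Nat.mod_lt _ (by omega)⟩ : Fin n)
      = ⟨(k + 2 + n - 1) % n, Nat.mod_lt _ (by omega)⟩ := by
    apply Fin.ext
    simp only
    rw [Nat.mod_add_mod, show k + 1 = k + 2 + n - 1 - n by omega]
    have : k + 2 + n - 1 = (k + 2 + n - 1 - n) + n := by omega
    conv_rhs => rw [this, Nat.add_mod_right]
  have e2 : (⟨(k % n + n - 1) % n, Nat.mod_lt _ (by omega)⟩ : Fin n)
      = ⟨(k + n - 1) % n, Nat.mod_lt _ (by omega)⟩ := by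
    apply Fin.ext
    simp only
    have h1 : k % n + n - 1 = k % n + (n - 1) := by omega
    rw [h1, Nat.mod_add_mod]
    congr 1
    omega
  have e3 : (⟨k % n, Nat.mod_lt _ (by omega)⟩ : Fin n)
      = ⟨(k + 1 + n - 1) % n, Nat.mod_lt _ (by omega)⟩ := by
    apply Fin.ext
    simp only
    have h1 : k + 1 + n - 1 = k + n := by omega
    rw [h1, Nat.add_mod_right]
  simp only [phiSeq]
  rw [e1, e2] at h
  have idx : (k + 1 + n - 1) % n = k % n := by
    rw [show k + 1 + n - 1 = k + n from by omega, Nat.add_mod_right]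
  simp only [idx]
  have c2 : ((k : ℝ) + 2 - 1) * g = (k : ℝ) * g + g := by ring
  have c1 : ((k : ℝ) + 1 - 1) * g = (k : ℝ) * g := by ring
  have c0 : ((k : ℝ) - 1) * g = (k : ℝ) * g + (-g) := by ring
  push_cast
  rw [c2, c1, c0, Real.exp_add, Real.exp_add]
  linear_combination Real.exp ((k : ℝ) * g) * h

lemma det_prod_one (l : List (Matrix (Fin 2) (Fin 2) ℝ)) (h : ∀ A ∈ l, A.det = 1) :
    l.prod.det = 1 := by
  induction l with
  | nil => simp
  | cons A t ih =>
    simp only [List.prod_cons, Matrix.det_mul]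
    rw [h A (by simp), ih (fun B hB => h B (by simp [hB]))]
    ring

/-- If `λ` is an eigenvalue of `H_n(g)`, then `Δ_n(λ) = e^{ng} + e^{-ng}`. -/
theorem trace_eq_of_eigenvalue (n : ℕ) (hn : 3 ≤ n) (g : ℝ) (hg : 0 ≤ g)
    (v : Fin n → ℝ) (lam : ℝ)
    (heig : ∃ ψ : Fin n → ℝ, ψ ≠ 0 ∧ (andersonRing n g v).mulVec ψ = lam • ψ) :
    traceDisc n v lam = Real.exp (n * g) + Real.exp (-(n * g)) ∧
      |traceDisc n v lam| = 2 * Real.cosh (n * g) := by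
  obtain ⟨ψ, hψ0, hψ⟩ := heig
  have hnpos : 0 < n := by omega
  set φ : ℕ → ℝ := phiSeq n hnpos g ψ with hφ
  have hrec : ∀ k : ℕ, φ (k + 2) =
      (lam - v ⟨k % n, Nat.mod_lt _ hnpos⟩) * φ (k + 1) - φ k :=
    fun k => phi_rec hn g v lam ψ hψ k
  set u : Fin 2 → ℝ := ![φ 1, φ 0] with hu
  -- the partial products
  set L : ℕ → List (Matrix (Fin 2) (Fin 2) ℝ) :=
    fun m => (List.range m).map (fun k => transferMatrix lam (v ⟨k % n, Nat.mod_lt _ hnpos⟩))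
    with hL
  have hstep : ∀ m : ℕ, ((L m).reverse.prod).mulVec u = ![φ (m + 1), φ m] := by
    intro m
    induction m with
    | zero => funext j; fin_cases j <;> simp [hL, hu, Matrix.one_mulVec]
    | succ m ih =>
      have : L (m + 1) = L m ++ [transferMatrix lam (v ⟨m % n, Nat.mod_lt _ hnpos⟩)] := by
        simp [hL, List.range_succ]
      rw [this, List.reverse_append, List.reverse_singleton, List.singleton_append,
        List.prod_cons, ← Matrix.mulVec_mulVec, ih]
      funext j
      fin_cases j <;>
        simp [transferMatrix, Matrix.mulVec, dotProduct, Fin.sum_univ_two, hrec m] <;> ring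
  -- the full product is the one in traceDisc
  set P : Matrix (Fin 2) (Fin 2) ℝ := (L n).reverse.prod with hP
  have hlist : (List.ofFn fun k : Fin n => transferMatrix lam (v k)) = L n := by
    apply List.ext_getElem
    · simp [hL]
    · intro k h1 h2
      have hk : k < n := by simpa [hL] using h2
      simp only [hL, List.getElem_ofFn, List.getElem_map, List.getElem_range,
        Nat.mod_eq_of_lt hk]
  have htrace : traceDisc n v lam = P.trace := by
    rw [traceDisc, hlist]
  -- eigen relation for P
  have hmul : P.mulVec u = Real.exp (n * g) • u := by
    have i1 : (n + 1 + n - 1) % n = 0 := by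
      rw [show n + 1 + n - 1 = 0 + n + n from by omega, Nat.add_mod_right, Nat.add_mod_right]
      exact Nat.zero_mod n
    have i2 : (n + n - 1) % n = n - 1 := by
      rw [show n + n - 1 = (n - 1) + n from by omega, Nat.add_mod_right]
      exact Nat.mod_eq_of_lt (by omega)
    have i3 : (1 + n - 1) % n = 0 := by
      rw [show 1 + n - 1 = n from by omega, Nat.mod_self]
    have i4 : (0 + n - 1) % n = n - 1 := by
      rw [show 0 + n - 1 = n - 1 from by omega]
      exact Nat.mod_eq_of_lt (by omega)
    have key1 : φ (n + 1) = Real.exp (n * g) * φ 1 := by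
      simp only [hφ, phiSeq, i1, i3]
      push_cast
      rw [show ((n : ℝ) + 1 - 1) * g = n * g from by ring,
        show ((1 : ℝ) - 1) * g = 0 from by ring, Real.exp_zero]
      ring
    have key0 : φ n = Real.exp (n * g) * φ 0 := by
      simp only [hφ, phiSeq, i2, i4]
      push_cast
      have he : Real.exp (((n : ℝ) - 1) * g) = Real.exp ((n : ℝ) * g) * Real.exp (((0:ℝ) - 1) * g) := by
        rw [← Real.exp_add]; ring_nf
      rw [he]; ring
    rw [hP, hstep n]
    funext j
    fin_cases j <;> simp [hu, key1, key0]
  -- u ≠ 0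
  have hune : u ≠ 0 := by
    intro h0
    have h1 : φ 1 = 0 := by
      have := congrFun h0 0; simpa [hu] using this
    have h2 : φ 0 = 0 := by
      have := congrFun h0 1; simpa [hu] using this
    have hall : ∀ k, φ k = 0 ∧ φ (k + 1) = 0 := by
      intro k
      induction k with
      | zero => exact ⟨h2, h1⟩
      | succ k ih => exact ⟨ih.2, by rw [hrec k, ih.1, ih.2]; ring⟩
    apply hψ0
    funext j
    have hj : φ (j.val + 1) = 0 := (hall (j.val + 1)).1
    have hidx : (j.val + 1 + n - 1) % n = j.val := by
      have : j.val + 1 + n - 1 = j.val + n := by omega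
      rw [this, Nat.add_mod_right]
      exact Nat.mod_eq_of_lt j.isLt
    rw [hφ] at hj
    simp only [phiSeq, hidx] at hj
    have := mul_eq_zero.mp hj
    rcases this with h | h
    · exact absurd h (Real.exp_ne_zero _)
    · simpa using h
  -- det P = 1
  have hdet : P.det = 1 := by
    apply det_prod_one
    intro A hA
    rw [List.mem_reverse] at hA
    simp only [hL, List.mem_map] at hA
    obtain ⟨k, -, rfl⟩ := hA
    simp [transferMatrix, Matrix.det_fin_two_of]
  -- singularity of P - μ I
  set μ : ℝ := Real.exp (n * g) with hμdef
  have hμpos : 0 < μ := Real.exp_pos _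
  have hsing : (P - μ • 1).det = 0 := by
    apply Matrix.exists_mulVec_eq_zero_iff.mp
    refine ⟨u, hune, ?_⟩
    rw [Matrix.sub_mulVec, Matrix.smul_mulVec, Matrix.one_mulVec, hmul, sub_self]
  have hd2 : (P 0 0 - μ) * (P 1 1 - μ) - P 0 1 * P 1 0 = 0 := by
    have := hsing
    rw [Matrix.det_fin_two] at this
    simpa [Matrix.sub_apply, Matrix.smul_apply, Matrix.one_apply, smul_eq_mul] using this
  have hd1 : P 0 0 * P 1 1 - P 0 1 * P 1 0 = 1 := by
    rw [Matrix.det_fin_two] at hdet; exact hdet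
  have hteq : P 0 0 + P 1 1 = μ + μ⁻¹ := by
    have hμne : μ ≠ 0 := ne_of_gt hμpos
    field_simp
    nlinarith [hd2, hd1]
  have htr : traceDisc n v lam = Real.exp (n * g) + Real.exp (-(n * g)) := by
    rw [htrace, Matrix.trace_fin_two, hteq, Real.exp_neg, hμdef]
  refine ⟨htr, ?_⟩
  rw [htr, Real.cosh_eq]
  rw [abs_of_pos (by positivity)]
  ring
end
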